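/- Let (X, δ) be a complete diversity and let D ⊆ X be a dense subset (with respect to the induced metric) such that the restricted diversity (D, δ) has the approximate extension property. Then (X, δ) has the approximate extension property. -/

import Mathlib

open scoped Classical

/-- A diversity on `X`: a real-valued function on finite subsets satisfying
(D1) nonnegativity with `δ A = 0 ↔ |A| ≤ 1`, and (D2) the triangle inequality. -/
structure Diversity (X : Type*) where
  δ : Finset X → ℝ
  nonneg : ∀ A : Finset X, 0 ≤ δ A
  eq_zero_iff : ∀ A : Finset X, δ A = 0 ↔ A.card ≤ 1
  triangle : ∀ A B C : Finset X, B.Nonempty → δ (A ∪ C) ≤ δ (A ∪ B) + δ (B ∪ C)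

/-- An admissible function on a diversity (a one-point extension). -/
structure IsAdmissible {X : Type*} (D : Diversity X) (f : Finset X → ℝ) : Prop where
  empty : f ∅ = 0
  le : ∀ A : Finset X, D.δ A ≤ f A
  tri : ∀ A B C : Finset X, C.Nonempty → f (A ∪ B) ≤ f (A ∪ C) + D.δ (B ∪ C)
  subadd : ∀ A B : Finset X, f (A ∪ B) ≤ f A + f B

/-- Restriction of a diversity to a subset. -/
noncomputable def Diversity.restrict {X : Type*} (D : Diversity X) (S : Set X) : Diversity S where
  δ A := D.δ (A.image Subtype.val)
  nonneg A := D.nonneg _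
  eq_zero_iff A := by
    rw [D.eq_zero_iff, Finset.card_image_of_injective _ Subtype.val_injective]
  triangle A B C hB := by
    have h := D.triangle (A.image Subtype.val) (B.image Subtype.val) (C.image Subtype.val)
      (hB.image _)
    simpa [Finset.image_union] using h

/-- Separability of the induced metric `d a b = δ {a, b}`. -/
def Diversity.SeparableD {X : Type*} (D : Diversity X) : Prop :=
  ∃ s : Set X, s.Countable ∧ ∀ x : X, ∀ ε : ℝ, 0 < ε → ∃ y ∈ s, D.δ {x, y} < ε

/-- Completeness of the induced metric `d a b = δ {a, b}`. -/
def Diversity.CompleteD {X : Type*} (D : Diversity X) : Prop :=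
  ∀ u : ℕ → X, (∀ ε : ℝ, 0 < ε → ∃ N : ℕ, ∀ m ≥ N, ∀ n ≥ N, D.δ {u m, u n} < ε) →
    ∃ x : X, ∀ ε : ℝ, 0 < ε → ∃ N : ℕ, ∀ n ≥ N, D.δ {u n, x} < ε

/-- The diversity `δ̂` on (finite sets of) admissible functions. -/
noncomputable def hatδ {X : Type*} (F : Finset (Finset X → ℝ)) : ℝ :=
  if F.card ≤ 1 then 0
  else sSup { r : ℝ | ∃ j ∈ F, ∃ A : (Finset X → ℝ) → Finset X,
    r = j ((F.erase j).biUnion A) - ∑ i ∈ F.erase j, i (A i) }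

/-- The canonical maximal extension `f_S^X` of an admissible function on `S ⊆ X`. -/
noncomputable def extFun {X : Type*} (D : Diversity X) (S : Set X) (f : Finset S → ℝ)
    (A : Finset X) : ℝ :=
  sInf { r : ℝ | ∃ (B : Finset S) (As : S → Finset X),
    B.biUnion As = A ∧ r = f B + ∑ b ∈ B, D.δ (insert (b : X) (As b)) }

/-- An admissible function is finitely supported if it is the canonical extension
of an admissible function on some finite nonempty `S ⊆ X`. -/
def FinitelySupported {X : Type*} (D : Diversity X) (f : Finset X → ℝ) : Prop :=
  ∃ S : Set X, S.Finite ∧ S.Nonempty ∧ ∃ g : Finset S → ℝ,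
    IsAdmissible (D.restrict S) g ∧ f = extFun D S g

/-- The extension property for a diversity. -/
def Diversity.ExtensionProp {X : Type*} (D : Diversity X) : Prop :=
  ∀ F : Finset X, ∀ f : Finset ((F : Set X)) → ℝ,
    IsAdmissible (D.restrict (F : Set X)) f →
    ∃ x : X, ∀ A : Finset ((F : Set X)), D.δ (insert x (A.image Subtype.val)) = f A

/-- The approximate extension property for a diversity. -/
def Diversity.ApproxExtensionProp {X : Type*} (D : Diversity X) : Prop :=
  ∀ F : Finset X, ∀ f : Finset ((F : Set X)) → ℝ,
    IsAdmissible (D.restrict (F : Set X)) f →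
    ∀ ε : ℝ, 0 < ε →
      ∃ x : X, ∀ A : Finset ((F : Set X)), |D.δ (insert x (A.image Subtype.val)) - f A| ≤ ε

/-- Ultrahomogeneity: isomorphisms between finite subsets extend to automorphisms. -/
def Diversity.Ultrahomogeneous {X : Type*} (D : Diversity X) : Prop :=
  ∀ (A A' : Finset X) (φ : ((A : Set X)) → ((A' : Set X))), Function.Bijective φ →
    (∀ B : Finset ((A : Set X)),
      D.δ (B.image (fun b => (φ b : X))) = D.δ (B.image Subtype.val)) →
    ∃ Φ : X → X, Function.Bijective Φ ∧ (∀ C : Finset X, D.δ (C.image Φ) = D.δ C) ∧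
      ∀ a : ((A : Set X)), Φ a = (φ a : X)

/-! Extend `f` from `F` to the canonical admissible function `extFun` on all of `X`, and move
each point of `F` to a point of `S` at distance `< η`. The extension, restricted to the moved
finite set, is admissible on `S`, so some `x ∈ S` realises it up to `ε / 2`. Moving the points
back changes both `δ (insert x ·)` and the extension by at most `|F| η`, because both satisfy
the triangle condition (iii) of admissibility; with `η` small this `x` realises `f` up to `ε`. -/

lemma Finset.image_val_subtype {X : Type*} {T : Set X} [DecidablePred (· ∈ T)] {s : Finset X}
    (h : ∀ x ∈ s, x ∈ T) : (s.subtype (· ∈ T)).image Subtype.val = s := by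
  conv_rhs => rw [← Finset.subtype_map_of_mem h, Finset.map_eq_image]
  rfl

namespace Diversity

variable {X : Type*} (D : Diversity X)

lemma δ_empty : D.δ ∅ = 0 := (D.eq_zero_iff ∅).2 (by simp)

lemma δ_singleton (a : X) : D.δ {a} = 0 := (D.eq_zero_iff _).2 (by simp)

lemma δ_union_le_of_mem {c : X} {s : Finset X} (hc : c ∈ s) (t : Finset X) :
    D.δ (s ∪ t) ≤ D.δ s + D.δ (insert c t) := by
  simpa [Finset.union_eq_left.2 (Finset.singleton_subset_iff.2 hc), ← Finset.insert_eq]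
    using D.triangle s {c} t (Finset.singleton_nonempty c)

lemma δ_insert_union_le (b : X) (s t : Finset X) :
    D.δ (insert b (s ∪ t)) ≤ D.δ (insert b s) + D.δ (insert b t) := by
  simpa [Finset.insert_union] using D.δ_union_le_of_mem (Finset.mem_insert_self b s) t

lemma δ_le_δ_insert (a : X) (s : Finset X) : D.δ s ≤ D.δ (insert a s) := by
  simpa [δ_singleton, Finset.union_comm s, ← Finset.insert_eq]
    using D.triangle s {a} ∅ (Finset.singleton_nonempty a)

lemma δ_le_δ_union (s u : Finset X) : D.δ s ≤ D.δ (u ∪ s) := by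
  induction u using Finset.induction_on with
  | empty => simp
  | insert a u _ ih =>
    rw [Finset.insert_union]
    exact ih.trans (D.δ_le_δ_insert a _)

lemma δ_mono {s t : Finset X} (h : s ⊆ t) : D.δ s ≤ D.δ t := by
  simpa only [Finset.union_eq_left.2 h] using D.δ_le_δ_union s t

/-- Condition (iii) in the definition of admissible functions. -/
def TriangleCompatible (h : Finset X → ℝ) : Prop :=
  ∀ A B C : Finset X, C.Nonempty → h (A ∪ B) ≤ h (A ∪ C) + D.δ (B ∪ C)

lemma triangleCompatible_δ : D.TriangleCompatible D.δ := fun A B C hC => by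
  simpa [Finset.union_comm C B] using D.triangle A C B hC

@[simp]
lemma restrict_δ (T : Set X) (A : Finset T) : (D.restrict T).δ A = D.δ (A.image Subtype.val) :=
  rfl

variable {D}

lemma _root_.IsAdmissible.triangleCompatible {h : Finset X → ℝ} (hh : IsAdmissible D h) :
    D.TriangleCompatible h :=
  hh.tri

lemma _root_.IsAdmissible.restrict {h : Finset X → ℝ} (hh : IsAdmissible D h) (T : Set X) :
    IsAdmissible (D.restrict T) (fun A => h (A.image Subtype.val)) where
  empty := by simp [hh.empty]
  le A := hh.le _
  tri A B C hC := by
    simpa only [restrict_δ, Finset.image_union] using hh.tri _ _ _ (hC.image _)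
  subadd A B := by
    simpa only [Finset.image_union] using hh.subadd _ _

lemma sum_δ_insert_ite {ι : Type*} [DecidableEq ι] {B C : Finset ι} (hBC : B ⊆ C)
    (e : ι → X) (As : ι → Finset X) :
    ∑ b ∈ C, D.δ (insert (e b) (if b ∈ B then As b else ∅)) =
      ∑ b ∈ B, D.δ (insert (e b) (As b)) := by
  rw [← Finset.sum_subset hBC fun b _ hb => by simp [hb, δ_singleton]]
  exact Finset.sum_congr rfl fun b hb => by simp [hb]

namespace TriangleCompatible

variable {h : Finset X → ℝ} (hh : D.TriangleCompatible h)
include hh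

lemma le_biUnion {ι : Type*} (B : Finset ι) (e : ι → X) (As : ι → Finset X) (E : Finset X) :
    h (E ∪ B.biUnion As) ≤ h (E ∪ B.image e) + ∑ b ∈ B, D.δ (insert (e b) (As b)) := by
  induction B using Finset.induction_on generalizing E with
  | empty => simp
  | insert a B ha ih =>
    have hrest := ih (E ∪ As a)
    have hstep := hh (E ∪ B.image e) (As a) {e a} (Finset.singleton_nonempty _)
    rw [Finset.union_singleton, Finset.union_singleton] at hstep
    rw [Finset.biUnion_insert, Finset.image_insert, Finset.sum_insert ha]
    calc h (E ∪ (As a ∪ B.biUnion As))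
        = h (E ∪ As a ∪ B.biUnion As) := by rw [Finset.union_assoc]
      _ ≤ h (E ∪ B.image e ∪ As a) + ∑ b ∈ B, D.δ (insert (e b) (As b)) := by
          rwa [Finset.union_right_comm E (As a) (B.image e)] at hrest
      _ ≤ _ := by
          rw [Finset.union_insert]
          linarith

lemma abs_sub_image_le (φ : X → X) (A E : Finset X) {η : ℝ}
    (hφ : ∀ a ∈ A, D.δ {a, φ a} ≤ η) :
    |h (E ∪ A.image φ) - h (E ∪ A)| ≤ A.card * η := by
  have hsum : ∑ a ∈ A, D.δ {a, φ a} ≤ A.card * η := by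
    simpa using Finset.sum_le_card_nsmul A _ η hφ
  have hle := hh.le_biUnion A id (fun a => {φ a}) E
  have hge := hh.le_biUnion A φ (fun a => {a}) E
  simp only [Finset.biUnion_singleton, Finset.biUnion_singleton_eq_self, Finset.image_id, id]
    at hle hge
  simp only [Finset.pair_comm (φ _)] at hge
  rw [abs_le]
  constructor <;> linarith

end TriangleCompatible

end Diversity

section extFun

open Diversity

variable {X : Type*} {D : Diversity X} {S : Set X} {f : Finset S → ℝ}

lemma IsAdmissible.δ_biUnion_le (hf : IsAdmissible (D.restrict S) f) (B : Finset S)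
    (As : S → Finset X) :
    D.δ (B.biUnion As) ≤ f B + ∑ b ∈ B, D.δ (insert (b : X) (As b)) := by
  have h := D.triangleCompatible_δ.le_biUnion B Subtype.val As ∅
  rw [Finset.empty_union, Finset.empty_union] at h
  linarith [hf.le B, restrict_δ D S B]

lemma extFun_biUnion_le (hf : IsAdmissible (D.restrict S) f) (B : Finset S) (As : S → Finset X) :
    extFun D S f (B.biUnion As) ≤ f B + ∑ b ∈ B, D.δ (insert (b : X) (As b)) := by
  refine csInf_le ⟨D.δ (B.biUnion As), ?_⟩ ⟨B, As, rfl, rfl⟩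
  rintro _ ⟨B', As', hcov, rfl⟩
  rw [← hcov]
  exact hf.δ_biUnion_le B' As'

lemma le_extFun (hS : S.Nonempty) {A : Finset X} {c : ℝ}
    (h : ∀ (B : Finset S) (As : S → Finset X), B.biUnion As = A →
      c ≤ f B + ∑ b ∈ B, D.δ (insert (b : X) (As b))) :
    c ≤ extFun D S f A := by
  obtain ⟨s, hs⟩ := hS
  refine le_csInf ⟨_, {⟨s, hs⟩}, fun _ => A, Finset.singleton_biUnion, rfl⟩ ?_
  rintro _ ⟨B, As, hcov, rfl⟩
  exact h B As hcov

variable (hf : IsAdmissible (D.restrict S) f) (hS : S.Nonempty)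
include hf hS

lemma extFun_mono : Monotone (extFun D S f) := by
  intro A A' hA
  refine le_extFun hS fun B As hcov => ?_
  calc extFun D S f A = extFun D S f (B.biUnion fun b => As b ∩ A) := by
        rw [← Finset.biUnion_inter, hcov, Finset.inter_eq_right.2 hA]
    _ ≤ f B + ∑ b ∈ B, D.δ (insert (b : X) (As b ∩ A)) := extFun_biUnion_le hf B _
    _ ≤ f B + ∑ b ∈ B, D.δ (insert (b : X) (As b)) := by
        gcongr with b
        exact D.δ_mono (Finset.insert_subset_insert _ Finset.inter_subset_left)

-- Enlarge by `B` the block of a cover of `A` that contains `c`.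
lemma extFun_union_le {A : Finset X} {c : X} (hc : c ∈ A) (B : Finset X) :
    extFun D S f (A ∪ B) ≤ extFun D S f A + D.δ (insert c B) := by
  suffices h : extFun D S f (A ∪ B) - D.δ (insert c B) ≤ extFun D S f A by linarith
  refine le_extFun hS fun B₀ As hcov => ?_
  obtain ⟨b₁, hb₁, hcb₁⟩ := Finset.mem_biUnion.1 (hcov ▸ hc)
  set As' := Function.update As b₁ (As b₁ ∪ B)
  have hcov' : B₀.biUnion As' = A ∪ B := by
    rw [← hcov]
    ext x
    simp only [Finset.mem_biUnion, Finset.mem_union, As', Function.update_apply]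
    grind
  have hterm : ∀ b ∈ B₀, D.δ (insert (b : X) (As' b)) ≤
      D.δ (insert (b : X) (As b)) + if b = b₁ then D.δ (insert c B) else 0 := by
    intro b _
    by_cases hb : b = b₁
    · subst hb
      simpa [As', ← Finset.insert_union] using
        D.δ_union_le_of_mem (Finset.mem_insert_of_mem hcb₁) B
    · simp [As', hb]
  have hsum := Finset.sum_le_sum hterm
  rw [Finset.sum_add_distrib, Finset.sum_ite_eq', if_pos hb₁] at hsum
  have := extFun_biUnion_le hf B₀ As'
  rw [hcov'] at this
  linarith

lemma extFun_union_le_add (A A' : Finset X) :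
    extFun D S f (A ∪ A') ≤ extFun D S f A + extFun D S f A' := by
  have key : ∀ B As, B.biUnion As = A → ∀ B' As', B'.biUnion As' = A' →
      extFun D S f (A ∪ A') ≤ (f B + ∑ b ∈ B, D.δ (insert (b : X) (As b))) +
        (f B' + ∑ b ∈ B', D.δ (insert (b : X) (As' b))) := by
    intro B As hcov B' As' hcov'
    set P : S → Finset X := fun b => if b ∈ B then As b else ∅
    set Q : S → Finset X := fun b => if b ∈ B' then As' b else ∅
    have hcovU : (B ∪ B').biUnion (fun b => P b ∪ Q b) = A ∪ A' := by
      rw [← hcov, ← hcov']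
      ext x
      simp only [Finset.mem_biUnion, Finset.mem_union, P, Q]
      grind
    have hsum := Finset.sum_le_sum fun b (_ : b ∈ B ∪ B') =>
      D.δ_insert_union_le (b : X) (P b) (Q b)
    rw [Finset.sum_add_distrib, D.sum_δ_insert_ite Finset.subset_union_left,
      D.sum_δ_insert_ite Finset.subset_union_right] at hsum
    have := extFun_biUnion_le hf (B ∪ B') fun b => P b ∪ Q b
    rw [hcovU] at this
    -- `convert` bridges the two classical `DecidableEq S` instances in `B ∪ B'`.
    have hsub : f (B ∪ B') ≤ f B + f B' := by convert hf.subadd B B'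
    linarith
  have hA : ∀ B As, B.biUnion As = A →
      extFun D S f (A ∪ A') - (f B + ∑ b ∈ B, D.δ (insert (b : X) (As b))) ≤
        extFun D S f A' :=
    fun B As hcov => le_extFun hS fun B' As' hcov' => by linarith [key B As hcov B' As' hcov']
  have : extFun D S f (A ∪ A') - extFun D S f A' ≤ extFun D S f A :=
    le_extFun hS fun B As hcov => by linarith [hA B As hcov]
  linarith

lemma extFun_empty : extFun D S f ∅ = 0 := by
  refine le_antisymm ?_ ?_
  · simpa [hf.empty] using extFun_biUnion_le hf ∅ fun _ => ∅
  · exact le_extFun hS fun B As _ => (D.nonneg _).trans (hf.δ_biUnion_le B As)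

lemma isAdmissible_extFun : IsAdmissible D (extFun D S f) where
  empty := extFun_empty hf hS
  le A := le_extFun hS fun B As hcov => hcov ▸ hf.δ_biUnion_le B As
  tri A B C := by
    rintro ⟨c, hc⟩
    calc extFun D S f (A ∪ B) ≤ extFun D S f (A ∪ C ∪ B) :=
          extFun_mono hf hS (Finset.union_subset_union_left Finset.subset_union_left)
      _ ≤ extFun D S f (A ∪ C) + D.δ (insert c B) :=
          extFun_union_le hf hS (Finset.mem_union_right A hc) B
      _ ≤ extFun D S f (A ∪ C) + D.δ (B ∪ C) := by
          gcongr
          exact D.δ_mono <|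
            Finset.insert_subset (Finset.mem_union_right B hc) Finset.subset_union_left
  subadd := extFun_union_le_add hf hS

lemma extFun_image_val (A : Finset S) : extFun D S f (A.image Subtype.val) = f A := by
  refine le_antisymm ?_ (le_extFun hS fun B As hcov => ?_)
  · simpa [Finset.biUnion_singleton, δ_singleton] using
      extFun_biUnion_le hf A fun b => {(b : X)}
  · have hsub : ∀ b ∈ B, ∀ x ∈ As b, x ∈ S := fun b hb x hx => by
      obtain ⟨a, -, rfl⟩ := Finset.mem_image.1 (hcov ▸ Finset.mem_biUnion.2 ⟨b, hb, hx⟩)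
      exact a.2
    set As' : S → Finset S := fun b => (As b).subtype (· ∈ S)
    have himage : ∀ b ∈ B, (As' b).image Subtype.val = As b := fun b hb =>
      Finset.image_val_subtype (hsub b hb)
    have hcov' : B.biUnion As' = A := Finset.image_injective Subtype.val_injective <| by
      rw [Finset.biUnion_image, Finset.biUnion_congr rfl himage, hcov]
    have h := hf.triangleCompatible.le_biUnion B id As' ∅
    simp only [Finset.empty_union, Finset.image_id, id, restrict_δ, Finset.image_insert] at h
    rw [Finset.sum_congr rfl fun b hb => by rw [himage b hb]] at h
    convert h using 2
    convert hcov'.symm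

end extFun

namespace Diversity

variable {X : Type*} {D : Diversity X}

lemma ApproxExtensionProp.nonempty (hD : D.ApproxExtensionProp) : Nonempty X := by
  have hzero : IsAdmissible (D.restrict ((∅ : Finset X) : Set X)) fun _ => 0 :=
    { empty := rfl
      le := fun A => by
        rw [Finset.eq_empty_of_forall_notMem (s := A) fun a _ => Finset.notMem_empty _ a.2,
          δ_empty]
      tri := fun _ _ _ _ => by simpa using Diversity.nonneg _ _
      subadd := fun _ _ => by norm_num }
  obtain ⟨x, -⟩ := hD ∅ _ hzero 1 one_pos
  exact ⟨x⟩

lemma ApproxExtensionProp.exists_approx (hD : D.ApproxExtensionProp) {h : Finset X → ℝ}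
    (hh : IsAdmissible D h) (F : Finset X) {ε : ℝ} (hε : 0 < ε) :
    ∃ x, ∀ A ⊆ F, |D.δ (insert x A) - h A| ≤ ε := by
  obtain ⟨x, hx⟩ := hD F _ (hh.restrict F) ε hε
  refine ⟨x, fun A hA => ?_⟩
  have hxA := hx (A.subtype (· ∈ (F : Set X)))
  rwa [Finset.image_val_subtype (T := (F : Set X)) hA] at hxA

lemma approxExtensionProp_of_forall_isAdmissible [Nonempty X]
    (H : ∀ h, IsAdmissible D h → ∀ (F : Finset X) (ε : ℝ), 0 < ε →
      ∃ x, ∀ A ⊆ F, |D.δ (insert x A) - h A| ≤ ε) :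
    D.ApproxExtensionProp := by
  intro F f hf ε hε
  rcases F.eq_empty_or_nonempty with rfl | hF
  · obtain ⟨x⟩ := ‹Nonempty X›
    refine ⟨x, fun A => ?_⟩
    rw [Finset.eq_empty_of_forall_notMem (s := A) fun a _ => Finset.notMem_empty _ a.2, hf.empty]
    simpa [δ_singleton] using hε.le
  · obtain ⟨x, hx⟩ := H _ (isAdmissible_extFun hf hF) F ε hε
    refine ⟨x, fun A => ?_⟩
    rw [← extFun_image_val hf hF A]
    exact hx _ fun a ha => by
      obtain ⟨b, -, rfl⟩ := Finset.mem_image.1 ha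
      exact b.2

lemma exists_approx_of_dense {S : Set X}
    (hdense : ∀ x : X, ∀ ε : ℝ, 0 < ε → ∃ y ∈ S, D.δ {x, y} < ε)
    (hS : (D.restrict S).ApproxExtensionProp) {h : Finset X → ℝ} (hh : IsAdmissible D h)
    (F : Finset X) {ε : ℝ} (hε : 0 < ε) :
    ∃ x, ∀ A ⊆ F, |D.δ (insert x A) - h A| ≤ ε := by
  set η := ε / (4 * (F.card + 1))
  have hη : 0 < η := by positivity
  have hcard : ∀ A ⊆ F, (A.card : ℝ) * η ≤ ε / 4 := fun A hA => by
    have : (A.card : ℝ) ≤ F.card + 1 := by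
      exact_mod_cast (Finset.card_le_card hA).trans (Nat.le_succ _)
    calc (A.card : ℝ) * η ≤ (F.card + 1) * η := by gcongr
      _ = ε / 4 := by simp only [η]; field_simp
  choose φ hφS hφ using fun x => hdense x η hη
  let ψ : X → S := fun x => ⟨φ x, hφS x⟩
  obtain ⟨x, hx⟩ := hS.exists_approx (hh.restrict S) (F.image ψ) (half_pos hε)
  refine ⟨x, fun A hA => ?_⟩
  have hS_approx := hx (A.image ψ) (Finset.image_subset_image hA)
  simp only [restrict_δ, Finset.image_insert, Finset.image_image] at hS_approx
  change |D.δ (insert (x : X) (A.image φ)) - h (A.image φ)| ≤ ε / 2 at hS_approx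
  have hδ_move := D.triangleCompatible_δ.abs_sub_image_le φ A {(x : X)} fun a _ => (hφ a).le
  have hh_move := hh.triangleCompatible.abs_sub_image_le φ A ∅ fun a _ => (hφ a).le
  rw [← Finset.insert_eq, ← Finset.insert_eq] at hδ_move
  rw [Finset.empty_union, Finset.empty_union] at hh_move
  have := hcard A hA
  rw [abs_le] at hS_approx hδ_move hh_move ⊢
  constructor <;> linarith

end Diversity

theorem stmt11_general {X : Type*} (D : Diversity X) (S : Set X)
    (hdense : ∀ x : X, ∀ ε : ℝ, 0 < ε → ∃ y ∈ S, D.δ {x, y} < ε)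
    (hS : (D.restrict S).ApproxExtensionProp) :
    D.ApproxExtensionProp := by
  have : Nonempty X := hS.nonempty.map Subtype.val
  exact Diversity.approxExtensionProp_of_forall_isAdmissible fun _ hh F _ hε =>
    Diversity.exists_approx_of_dense hdense hS hh F hε

/-- If a complete diversity has a dense subset whose restricted diversity has the
approximate extension property, then the whole diversity has it too. -/
theorem stmt11 {X : Type*} (D : Diversity X) (hc : D.CompleteD) (S : Set X)
    (hdense : ∀ x : X, ∀ ε : ℝ, 0 < ε → ∃ y ∈ S, D.δ {x, y} < ε)
    (hS : (D.restrict S).ApproxExtensionProp) :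
    D.ApproxExtensionProp :=
  stmt11_general D S hdense hS
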